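/- arXiv:1709.01702 — 6 statements merged into one kernel-verified Lean document; each statement's English description precedes it below -/
import Mathlib

section
/- Let 0 < p < 1, T > 0, α > 2 and C > 0, and define ξ(G) = C·(1 − (1−p)^{G·T})·G^{−2/α} for G > 0. Then there exists a unique g₀ > 0 at which ξ attains its global maximum over (0,∞); moreover ξ is strictly monotone increasing on (0, g₀] and strictly monotone decreasing on [g₀, ∞), and g₀ satisfies the critical-point equation α·g₀·T·ln(1−p)·(1−p)^{g₀·T} − 2·(1−p)^{g₀·T} + 2 = 0. -/
/-!
Write `(1 - p) ^ (G * T) = exp (-(b * G))` with `b = -T log (1 - p) > 0`, and let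
`c = 2 / α ∈ (0, 1)`. Then
`ξ' G = C G ^ (-c - 1) φ G` with `φ x = exp (-(b x)) (b x + c) - c`.
Since `φ' x = b exp (-(b x)) (1 - c - b x)`, `φ` rises from `φ 0 = 0` up to `x = (1 - c) / b`
and then decreases to `-c < 0`, so it has exactly one positive zero `g₀`, positive before it and
negative after it. Hence `ξ` is unimodal with peak `g₀`, and `φ g₀ = 0` is the critical-point
equation.
-/

open Filter Real Set Topology

theorem apply_lt_of_strictMonoOn_of_strictAntiOn {α β : Type*} [LinearOrder α] [Preorder β]
    {f : α → β} {a g x : α} (hag : a < g) (hmono : StrictMonoOn f (Ioc a g))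
    (hanti : StrictAntiOn f (Ici g)) (hx : a < x) (hxg : x ≠ g) : f x < f g := by
  rcases hxg.lt_or_gt with hlt | hgt
  · exact hmono ⟨hx, hlt.le⟩ ⟨hag, le_rfl⟩ hlt
  · exact hanti (mem_Ici.2 le_rfl) hgt.le hgt

namespace InterferenceCoverage

/-- The interference-coverage function with `(1 - p) ^ (G * T)` written as `exp (-(b * G))`. -/
noncomputable def xi (C b c G : ℝ) : ℝ := C * (1 - exp (-(b * G))) * G ^ (-c)

/-- `G ^ (c + 1) / C` times the derivative of `xi C b c` at `G > 0`. -/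
noncomputable def xiDerivNum (b c x : ℝ) : ℝ := exp (-(b * x)) * (b * x + c) - c

variable {b c : ℝ}

theorem hasDerivAt_xiDerivNum (x : ℝ) :
    HasDerivAt (xiDerivNum b c) (b * exp (-(b * x)) * (1 - c - b * x)) x := by
  have hlin : HasDerivAt (fun x => b * x) b x := by simpa using (hasDerivAt_id x).const_mul b
  have hexp : HasDerivAt (fun x => exp (-(b * x))) (exp (-(b * x)) * -b) x :=
    (hasDerivAt_exp _).comp x hlin.neg
  refine ((hexp.mul (hlin.add_const c)).sub_const c).congr_deriv ?_
  ring

theorem continuous_xiDerivNum : Continuous (xiDerivNum b c) := by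
  unfold xiDerivNum; fun_prop

theorem xiDerivNum_zero : xiDerivNum b c 0 = 0 := by simp [xiDerivNum]

theorem strictMonoOn_xiDerivNum (hb : 0 < b) :
    StrictMonoOn (xiDerivNum b c) (Icc 0 ((1 - c) / b)) := by
  refine strictMonoOn_of_deriv_pos (convex_Icc _ _) continuous_xiDerivNum.continuousOn
    fun x hx => ?_
  rw [interior_Icc, mem_Ioo, lt_div_iff₀ hb] at hx
  rw [(hasDerivAt_xiDerivNum x).deriv]
  have : 0 < 1 - c - b * x := by linarith
  positivity

theorem strictAntiOn_xiDerivNum (hb : 0 < b) :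
    StrictAntiOn (xiDerivNum b c) (Ici ((1 - c) / b)) := by
  refine strictAntiOn_of_deriv_neg (convex_Ici _) continuous_xiDerivNum.continuousOn
    fun x hx => ?_
  rw [interior_Ici, mem_Ioi, div_lt_iff₀ hb] at hx
  rw [(hasDerivAt_xiDerivNum x).deriv]
  exact mul_neg_of_pos_of_neg (by positivity) (by linarith)

theorem tendsto_xiDerivNum_atTop (hb : 0 < b) : Tendsto (xiDerivNum b c) atTop (𝓝 (-c)) := by
  have hu : Tendsto (fun u : ℝ => (u + c) * exp (-u)) atTop (𝓝 0) := by
    simpa [add_mul] using (tendsto_pow_mul_exp_neg_atTop_nhds_zero 1).add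
      (tendsto_exp_neg_atTop_nhds_zero.const_mul c)
  have := (hu.comp (tendsto_id.const_mul_atTop hb)).sub_const c
  rw [zero_sub] at this
  refine this.congr fun x => ?_
  simp only [Function.comp_apply, id, xiDerivNum]
  ring

theorem exists_xiDerivNum_sign_change (hb : 0 < b) (hc0 : 0 < c) (hc1 : c < 1) :
    ∃ g₀, 0 < g₀ ∧ xiDerivNum b c g₀ = 0 ∧
      (∀ x ∈ Ioo 0 g₀, 0 < xiDerivNum b c x) ∧
      ∀ x ∈ Ioi g₀, xiDerivNum b c x < 0 := by
  set m := (1 - c) / b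
  have hm : 0 < m := div_pos (by linarith) hb
  have hmono := strictMonoOn_xiDerivNum (c := c) hb
  have hanti := strictAntiOn_xiDerivNum (c := c) hb
  have hpos : ∀ x ∈ Ioc 0 m, 0 < xiDerivNum b c x := fun x hx => by
    simpa [xiDerivNum_zero] using hmono ⟨le_rfl, hm.le⟩ ⟨hx.1.le, hx.2⟩ hx.1
  obtain ⟨X, hXneg, hmX⟩ :=
    (((tendsto_xiDerivNum_atTop hb).eventually_lt_const (neg_lt_zero.2 hc0)).and
      (eventually_ge_atTop m)).exists
  obtain ⟨g₀, hg₀, hzero⟩ := intermediate_value_Icc' hmX continuous_xiDerivNum.continuousOn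
    ⟨hXneg.le, (hpos m ⟨hm, le_rfl⟩).le⟩
  have hmg₀ : m < g₀ := hg₀.1.lt_of_ne fun h => by
    have := hpos m ⟨hm, le_rfl⟩
    rw [h, hzero] at this
    exact this.false
  refine ⟨g₀, hm.trans hmg₀, hzero, fun x hx => ?_, fun x hx => ?_⟩
  · rcases le_or_gt x m with hxm | hmx
    · exact hpos x ⟨hx.1, hxm⟩
    · simpa [hzero] using hanti hmx.le hmg₀.le hx.2
  · simpa [hzero] using hanti hmg₀.le (hmg₀.trans hx).le hx

theorem hasDerivAt_xi (C : ℝ) {G : ℝ} (hG : 0 < G) :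
    HasDerivAt (xi C b c) (C * G ^ (-c - 1) * xiDerivNum b c G) G := by
  have hlin : HasDerivAt (fun x => b * x) b G := by simpa using (hasDerivAt_id G).const_mul b
  have hexp : HasDerivAt (fun x => exp (-(b * x))) (exp (-(b * G)) * -b) G :=
    (hasDerivAt_exp _).comp G hlin.neg
  have hpow : HasDerivAt (fun x => x ^ (-c)) (-c * G ^ (-c - 1)) G :=
    hasDerivAt_rpow_const (Or.inl hG.ne')
  refine (((hexp.const_sub 1).const_mul C).mul hpow).congr_deriv ?_
  rw [xiDerivNum, show G ^ (-c) = G ^ (-c - 1) * G by rw [← rpow_add_one hG.ne']; ring_nf]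
  ring

theorem exists_xi_unimodal {C : ℝ} (hC : 0 < C) (hb : 0 < b) (hc0 : 0 < c) (hc1 : c < 1) :
    ∃ g₀, 0 < g₀ ∧ xiDerivNum b c g₀ = 0 ∧ StrictMonoOn (xi C b c) (Ioc 0 g₀) ∧
      StrictAntiOn (xi C b c) (Ici g₀) := by
  obtain ⟨g₀, hg₀, hzero, hpos, hneg⟩ := exists_xiDerivNum_sign_change hb hc0 hc1
  have hcont : ContinuousOn (xi C b c) (Ioi 0) := fun x hx =>
    (hasDerivAt_xi C hx).continuousAt.continuousWithinAt
  refine ⟨g₀, hg₀, hzero, ?_, ?_⟩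
  · refine strictMonoOn_of_deriv_pos (convex_Ioc _ _)
      (hcont.mono Ioc_subset_Ioi_self) fun x hx => ?_
    rw [interior_Ioc] at hx
    have hx0 : 0 < x := hx.1
    rw [(hasDerivAt_xi C hx0).deriv]
    exact mul_pos (by positivity) (hpos x hx)
  · refine strictAntiOn_of_deriv_neg (convex_Ici _)
      (hcont.mono fun x hx => hg₀.trans_le hx) fun x hx => ?_
    rw [interior_Ici] at hx
    have hx0 : 0 < x := hg₀.trans hx
    rw [(hasDerivAt_xi C hx0).deriv]
    exact mul_neg_of_pos_of_neg (by positivity) (hneg x hx)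

end InterferenceCoverage

open InterferenceCoverage in
/-- For `0 < p < 1`, `T > 0`, `α > 2`, `C > 0` and
`ξ(G) = C·(1 − (1−p)^{G·T})·G^{−2/α}` (rpow) on `(0,∞)`, there is a unique
global maximizer `g₀ > 0`; `ξ` is strictly increasing on `(0, g₀]`, strictly
decreasing on `[g₀, ∞)`, and `g₀` satisfies the critical-point equation. -/
theorem stmt_0 (p T α C : ℝ) (hp0 : 0 < p) (hp1 : p < 1) (hT : 0 < T)
    (hα : 2 < α) (hC : 0 < C) (ξ : ℝ → ℝ)
    (hξ : ∀ G : ℝ, 0 < G → ξ G = C * (1 - (1 - p) ^ (G * T)) * G ^ (-2 / α)) :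
    ∃ g₀ : ℝ, 0 < g₀ ∧ (∀ G, 0 < G → ξ G ≤ ξ g₀) ∧
      (∀ g', 0 < g' → (∀ G, 0 < G → ξ G ≤ ξ g') → g' = g₀) ∧
      StrictMonoOn ξ (Set.Ioc 0 g₀) ∧ StrictAntiOn ξ (Set.Ici g₀) ∧
      α * g₀ * T * Real.log (1 - p) * (1 - p) ^ (g₀ * T)
        - 2 * (1 - p) ^ (g₀ * T) + 2 = 0 := by
  set b := -(T * log (1 - p)) with hb_def
  have hb : 0 < b := neg_pos.2 (mul_neg_of_pos_of_neg hT (log_neg (by linarith) (by linarith)))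
  have hpow : ∀ G, (1 - p) ^ (G * T) = exp (-(b * G)) := fun G => by
    rw [rpow_def_of_pos (by linarith), hb_def]; ring_nf
  have hc0 : 0 < 2 / α := by positivity
  have hc1 : 2 / α < 1 := (div_lt_one (by linarith)).2 hα
  have hξ_eq : EqOn (xi C b (2 / α)) ξ (Ioi 0) := fun G hG => by
    rw [hξ G hG, hpow, xi, neg_div]
  obtain ⟨g₀, hg₀, hzero, hmono, hanti⟩ := exists_xi_unimodal hC hb hc0 hc1
  have hmono' := hmono.congr (hξ_eq.mono Ioc_subset_Ioi_self)
  have hanti' := hanti.congr (hξ_eq.mono fun x hx => hg₀.trans_le hx)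
  have hlt : ∀ G, 0 < G → G ≠ g₀ → ξ G < ξ g₀ := fun G hG hne =>
    apply_lt_of_strictMonoOn_of_strictAntiOn hg₀ hmono' hanti' hG hne
  refine ⟨g₀, hg₀, fun G hG => ?_, fun g' hg' hmax => ?_, hmono', hanti', ?_⟩
  · rcases eq_or_ne G g₀ with rfl | hne
    · exact le_rfl
    · exact (hlt G hG hne).le
  · by_contra hne
    exact (hmax g₀ hg₀).not_gt (hlt g' hg' hne)
  · have hc : α * (2 / α) = 2 := by field_simp
    rw [hpow]
    unfold xiDerivNum at hzero
    linear_combination (-α) * hzero + (exp (-(b * g₀)) - 1) * hc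
      + (α * exp (-(b * g₀)) * g₀) * hb_def
end

section
/- Let 0 < p < 1, T > 0, α > 2 and C > 0, and define ξ(G) = C·(1 − (1−p)^{G·T})·G^{−2/α} for G > 0, with unique maximizer g₀ > 0. If F is any real number with 0 < F < ξ(g₀), then there exist unique g_a ∈ (0, g₀) and g_b ∈ (g₀, ∞) with ξ(g_a) = ξ(g_b) = F, and for every G > 0 one has ξ(G) ≤ F if and only if G ≤ g_a or G ≥ g_b. -/
/-!
The function ξ is continuous on (0, ∞) and tends to 0 at both ends: near 0 because
1 − (1−p)^{GT} ≤ −log(1−p)·GT makes ξ(G) = O(G^{1−2/α}) with 1 − 2/α > 0, and at ∞ because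
ξ(G) ≤ C·G^{−2/α}. Since 0 < F < ξ(g₀), the intermediate value theorem on each side of g₀ yields
g_a and g_b; strict monotonicity on (0, g₀] and on [g₀, ∞) makes them unique and identifies the
sublevel set {ξ ≤ F} with (0, g_a] ∪ [g_b, ∞).
-/

open Set Filter Topology

section Unimodal

variable {f : ℝ → ℝ} {a b l F : ℝ}

theorem exists_mem_Ioo_eq_of_tendsto_nhdsGT (hab : a < b) (hf : ContinuousOn f (Ioc a b))
    (hlim : Tendsto f (𝓝[>] a) (𝓝 l)) (hlF : l < F) (hFb : F < f b) :
    ∃ c ∈ Ioo a b, f c = F := by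
  obtain ⟨x, hfx, hx⟩ := ((hlim.eventually (gt_mem_nhds hlF)).and (Ioo_mem_nhdsGT hab)).exists
  obtain ⟨c, hc, hfc⟩ :=
    intermediate_value_Icc hx.2.le (hf.mono (Icc_subset_Ioc hx.1 le_rfl)) ⟨hfx.le, hFb.le⟩
  refine ⟨c, ⟨hx.1.trans_le hc.1, hc.2.lt_of_ne ?_⟩, hfc⟩
  rintro rfl
  exact hFb.ne' hfc

theorem exists_mem_Ioi_eq_of_tendsto_atTop (hf : ContinuousOn f (Ici b))
    (hlim : Tendsto f atTop (𝓝 l)) (hlF : l < F) (hFb : F < f b) :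
    ∃ c ∈ Ioi b, f c = F := by
  obtain ⟨y, hfy, hy⟩ := ((hlim.eventually (gt_mem_nhds hlF)).and (eventually_ge_atTop b)).exists
  obtain ⟨c, hc, hfc⟩ :=
    intermediate_value_Icc' hy (hf.mono Icc_subset_Ici_self) ⟨hfy.le, hFb.le⟩
  refine ⟨c, hc.1.lt_of_ne ?_, hfc⟩
  rintro rfl
  exact hFb.ne' hfc

theorem le_iff_le_or_le_of_strictMonoOn_of_strictAntiOn {ga gb G : ℝ}
    (hmono : StrictMonoOn f (Ioc a b)) (hanti : StrictAntiOn f (Ici b))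
    (hga : ga ∈ Ioo a b) (hfga : f ga = F) (hgb : gb ∈ Ioi b) (hfgb : f gb = F) (hG : a < G) :
    f G ≤ F ↔ G ≤ ga ∨ gb ≤ G := by
  rcases le_total G b with hGb | hbG
  · have hgbG : ¬gb ≤ G := fun h => (hgb.out.trans_le h).not_ge hGb
    rw [← hfga, hmono.le_iff_le ⟨hG, hGb⟩ ⟨hga.1, hga.2.le⟩, or_iff_left hgbG]
  · have hGga : ¬G ≤ ga := fun h => (hga.2.trans_le hbG).not_ge h
    rw [← hfgb, hanti.le_iff_ge hbG hgb.out.le, or_iff_right hGga]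

end Unimodal

theorem one_sub_rpow_le {b x : ℝ} (hb : 0 < b) : 1 - b ^ x ≤ -Real.log b * x := by
  have := Real.add_one_le_exp (Real.log b * x)
  rw [Real.rpow_def_of_pos hb]
  linarith

noncomputable def interferenceCoverage (C p T α G : ℝ) : ℝ :=
  C * (1 - (1 - p) ^ (G * T)) * G ^ (-2 / α)

section InterferenceCoverage

variable {C p T α : ℝ}

theorem continuousOn_interferenceCoverage (hp : p ≠ 1) :
    ContinuousOn (interferenceCoverage C p T α) (Ioi 0) := by
  intro G hG
  refine ContinuousAt.continuousWithinAt ?_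
  unfold interferenceCoverage
  have : ContinuousAt (fun G : ℝ => (1 - p) ^ (G * T)) G :=
    (Real.continuousAt_const_rpow (sub_ne_zero.mpr hp.symm)).comp (continuousAt_id.mul continuousAt_const)
  exact (continuousAt_const.mul (continuousAt_const.sub this)).mul
    (Real.continuousAt_rpow_const G _ (Or.inl (ne_of_gt hG)))

theorem interferenceCoverage_nonneg (hC : 0 ≤ C) (hp0 : 0 ≤ p) (hp1 : p ≤ 1) (hT : 0 ≤ T)
    {G : ℝ} (hG : 0 ≤ G) : 0 ≤ interferenceCoverage C p T α G := by
  have hpow : (1 - p) ^ (G * T) ≤ 1 :=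
    Real.rpow_le_one (by linarith) (by linarith) (by positivity)
  have : 0 ≤ 1 - (1 - p) ^ (G * T) := sub_nonneg.mpr hpow
  unfold interferenceCoverage
  positivity

theorem interferenceCoverage_le_mul_rpow (hC : 0 ≤ C) (hp : p < 1) {G : ℝ} (hG : 0 < G) :
    interferenceCoverage C p T α G ≤ C * (-Real.log (1 - p) * T) * G ^ (1 + -2 / α) := by
  unfold interferenceCoverage
  rw [Real.rpow_add hG, Real.rpow_one]
  calc C * (1 - (1 - p) ^ (G * T)) * G ^ (-2 / α)
      ≤ C * (-Real.log (1 - p) * (G * T)) * G ^ (-2 / α) := by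
        gcongr
        exact one_sub_rpow_le (by linarith)
    _ = C * (-Real.log (1 - p) * T) * (G * G ^ (-2 / α)) := by ring

theorem interferenceCoverage_le_const_mul_rpow (hC : 0 ≤ C) (hp : p ≤ 1) {G : ℝ} (hG : 0 ≤ G) :
    interferenceCoverage C p T α G ≤ C * G ^ (-2 / α) := by
  have : 0 ≤ (1 - p) ^ (G * T) := Real.rpow_nonneg (by linarith) (G * T)
  unfold interferenceCoverage
  calc C * (1 - (1 - p) ^ (G * T)) * G ^ (-2 / α) ≤ C * 1 * G ^ (-2 / α) := by gcongr; linarith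
    _ = C * G ^ (-2 / α) := by rw [mul_one]

theorem tendsto_interferenceCoverage_nhdsGT_zero (hC : 0 ≤ C) (hp0 : 0 ≤ p) (hp1 : p < 1)
    (hT : 0 ≤ T) (hα : 2 < α) :
    Tendsto (interferenceCoverage C p T α) (𝓝[>] 0) (𝓝 0) := by
  have hexp : 0 < 1 + -2 / α := by
    rw [neg_div, ← sub_eq_add_neg, sub_pos, div_lt_one (by linarith)]
    exact hα
  have hrpow : Tendsto (fun G : ℝ => G ^ (1 + -2 / α)) (𝓝[>] 0) (𝓝 0) := by
    have := (Real.continuousAt_rpow_const 0 _ (Or.inr hexp.le)).tendsto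
    rw [Real.zero_rpow hexp.ne'] at this
    exact this.mono_left nhdsWithin_le_nhds
  have hlim := hrpow.const_mul (C * (-Real.log (1 - p) * T))
  rw [mul_zero] at hlim
  refine tendsto_of_tendsto_of_tendsto_of_le_of_le' tendsto_const_nhds hlim ?_ ?_
  · filter_upwards [self_mem_nhdsWithin] with G hG
    exact interferenceCoverage_nonneg hC hp0 hp1.le hT (le_of_lt hG)
  · filter_upwards [self_mem_nhdsWithin] with G hG
    exact interferenceCoverage_le_mul_rpow hC hp1 hG

theorem tendsto_interferenceCoverage_atTop (hC : 0 ≤ C) (hp0 : 0 ≤ p) (hp1 : p ≤ 1)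
    (hT : 0 ≤ T) (hα : 0 < α) :
    Tendsto (interferenceCoverage C p T α) atTop (𝓝 0) := by
  have hlim : Tendsto (fun G : ℝ => C * G ^ (-2 / α)) atTop (𝓝 0) := by
    simpa [neg_div] using (tendsto_rpow_neg_atTop (by positivity : 0 < 2 / α)).const_mul C
  refine tendsto_of_tendsto_of_tendsto_of_le_of_le' tendsto_const_nhds hlim ?_ ?_
  · filter_upwards [eventually_ge_atTop 0] with G hG
    exact interferenceCoverage_nonneg hC hp0 hp1 hT hG
  · filter_upwards [eventually_ge_atTop 0] with G hG
    exact interferenceCoverage_le_const_mul_rpow hC hp1 hG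

end InterferenceCoverage

theorem stmt_4_general (p T α C g₀ F : ℝ) (hp0 : 0 < p) (hp1 : p < 1) (hT : 0 < T)
    (hα : 2 < α) (hC : 0 < C) (ξ : ℝ → ℝ)
    (hξ : ∀ G : ℝ, 0 < G → ξ G = C * (1 - (1 - p) ^ (G * T)) * G ^ (-2 / α))
    (hg₀ : 0 < g₀) (hmono : StrictMonoOn ξ (Set.Ioc 0 g₀))
    (hanti : StrictAntiOn ξ (Set.Ici g₀))
    (hF0 : 0 < F) (hF : F < ξ g₀) :
    (∃! ga : ℝ, ga ∈ Set.Ioo 0 g₀ ∧ ξ ga = F) ∧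
    (∃! gb : ℝ, gb ∈ Set.Ioi g₀ ∧ ξ gb = F) ∧
    ∀ ga gb : ℝ, ga ∈ Set.Ioo 0 g₀ → ξ ga = F → gb ∈ Set.Ioi g₀ → ξ gb = F →
      ∀ G : ℝ, 0 < G → (ξ G ≤ F ↔ G ≤ ga ∨ gb ≤ G) := by
  have hξ_eq : EqOn ξ (interferenceCoverage C p T α) (Ioi 0) := fun G hG => hξ G hG
  have hcont : ContinuousOn ξ (Ioi 0) := (continuousOn_interferenceCoverage hp1.ne).congr hξ_eq
  have hlim₀ : Tendsto ξ (𝓝[>] 0) (𝓝 0) :=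
    (tendsto_interferenceCoverage_nhdsGT_zero hC.le hp0.le hp1 hT.le hα).congr'
      hξ_eq.eventuallyEq_nhdsWithin.symm
  have hlim_top : Tendsto ξ atTop (𝓝 0) :=
    (tendsto_interferenceCoverage_atTop hC.le hp0.le hp1.le hT.le (by linarith)).congr'
      ((eventually_gt_atTop 0).mono fun G hG => (hξ G hG).symm)
  obtain ⟨ga, hga, hξga⟩ := exists_mem_Ioo_eq_of_tendsto_nhdsGT hg₀
    (hcont.mono Ioc_subset_Ioi_self) hlim₀ hF0 hF
  obtain ⟨gb, hgb, hξgb⟩ := exists_mem_Ioi_eq_of_tendsto_atTop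
    (hcont.mono (Ici_subset_Ioi.mpr hg₀)) hlim_top hF0 hF
  refine ⟨⟨ga, ⟨hga, hξga⟩, fun c hc => ?_⟩, ⟨gb, ⟨hgb, hξgb⟩, fun c hc => ?_⟩,
    fun ga gb hga hξga hgb hξgb G hG =>
      le_iff_le_or_le_of_strictMonoOn_of_strictAntiOn hmono hanti hga hξga hgb hξgb hG⟩
  · exact hmono.injOn ⟨hc.1.1, hc.1.2.le⟩ ⟨hga.1, hga.2.le⟩ (hc.2.trans hξga.symm)
  · exact hanti.injOn hc.1.out.le hgb.out.le (hc.2.trans hξgb.symm)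

/-- With `ξ(G) = C·(1−(1−p)^{G·T})·G^{−2/α}` and `g₀` its unique
maximizer (strictly increasing on `(0,g₀]`, strictly decreasing on `[g₀,∞)`),
for any `0 < F < ξ(g₀)` there are unique `g_a ∈ (0,g₀)` and `g_b ∈ (g₀,∞)` with
`ξ(g_a) = ξ(g_b) = F`, and for every `G > 0`: `ξ(G) ≤ F ↔ G ≤ g_a ∨ g_b ≤ G`. -/
theorem stmt_4 (p T α C g₀ F : ℝ) (hp0 : 0 < p) (hp1 : p < 1) (hT : 0 < T)
    (hα : 2 < α) (hC : 0 < C) (ξ : ℝ → ℝ)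
    (hξ : ∀ G : ℝ, 0 < G → ξ G = C * (1 - (1 - p) ^ (G * T)) * G ^ (-2 / α))
    (hg₀ : 0 < g₀) (hmono : StrictMonoOn ξ (Set.Ioc 0 g₀))
    (hanti : StrictAntiOn ξ (Set.Ici g₀))
    (hmax : ∀ G, 0 < G → ξ G ≤ ξ g₀)
    (hF0 : 0 < F) (hF : F < ξ g₀) :
    (∃! ga : ℝ, ga ∈ Set.Ioo 0 g₀ ∧ ξ ga = F) ∧
    (∃! gb : ℝ, gb ∈ Set.Ioi g₀ ∧ ξ gb = F) ∧
    ∀ ga gb : ℝ, ga ∈ Set.Ioo 0 g₀ → ξ ga = F → gb ∈ Set.Ioi g₀ → ξ gb = F →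
      ∀ G : ℝ, 0 < G → (ξ G ≤ F ↔ G ≤ ga ∨ gb ≤ G) :=
  stmt_4_general p T α C g₀ F hp0 hp1 hT hα hC ξ hξ hg₀ hmono hanti hF0 hF
end

section
/- Let 0 < p < 1 and T > 0. The communication-latency function T_comm(G) = G·T + G·T/(1 − (1−p)^{G·T}) − 1/p is strictly monotone increasing in G on (0, ∞). -/
/-!
With `b = 1 - p`, the map `x ↦ bˣ` is strictly convex, so the slope `(1 - bˣ) / x` of the chord
of `x ↦ 1 - bˣ` through the origin is strictly decreasing on `(0, ∞)` and of constant sign;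
hence its reciprocal `x / (1 - bˣ)` is strictly increasing, and so is `T_comm(G)`, which is
`x + x / (1 - bˣ)` at `x = G·T`, shifted by a constant.
-/

open Real Set

theorem strictConvexOn_rpow_left {b : ℝ} (hb₀ : 0 < b) (hb₁ : b ≠ 1) :
    StrictConvexOn ℝ univ fun x : ℝ ↦ b ^ x := by
  have hlog : log b ≠ 0 := log_ne_zero_of_pos_of_ne_one hb₀ hb₁
  refine ⟨convex_univ, fun x _ y _ hxy s t hs ht hst ↦ ?_⟩
  simp only [rpow_def_of_pos hb₀, smul_eq_mul]
  have hne : log b * x ≠ log b * y := by simpa [hlog] using hxy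
  have := strictConvexOn_exp.2 (mem_univ _) (mem_univ _) hne hs ht hst
  simp only [smul_eq_mul] at this
  convert this using 2
  ring

theorem strictMonoOn_div_one_sub_rpow {b : ℝ} (hb₀ : 0 < b) (hb₁ : b ≠ 1) :
    StrictMonoOn (fun x : ℝ ↦ x / (1 - b ^ x)) (Ioi 0) := by
  intro x (hx : 0 < x) y (hy : 0 < y) hxy
  have hsecant : (1 - b ^ y) / y < (1 - b ^ x) / x := by
    have h := (strictConvexOn_rpow_left hb₀ hb₁).neg.secant_strict_mono (a := 0) (mem_univ _)
      (mem_univ x) (mem_univ y) hx.ne' hy.ne' hxy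
    simpa only [Pi.neg_apply, rpow_zero, sub_zero, sub_neg_eq_add, neg_add_eq_sub] using h
  show x / (1 - b ^ x) < y / (1 - b ^ y)
  rw [← inv_div (1 - b ^ x), ← inv_div (1 - b ^ y)]
  rcases hb₁.lt_or_gt with hb | hb
  · have hpos : ∀ z : ℝ, 0 < z → 0 < (1 - b ^ z) / z := fun z hz ↦
      div_pos (sub_pos.2 (rpow_lt_one hb₀.le hb hz)) hz
    exact (inv_lt_inv₀ (hpos x hx) (hpos y hy)).2 hsecant
  · have hneg : ∀ z : ℝ, 0 < z → (1 - b ^ z) / z < 0 := fun z hz ↦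
      div_neg_of_neg_of_pos (sub_neg.2 (one_lt_rpow hb hz)) hz
    exact (inv_lt_inv_of_neg (hneg x hx) (hneg y hy)).2 hsecant

/-- For `0 < p < 1` and `T > 0`, the communication latency
`T_comm(G) = G·T + G·T/(1 − (1−p)^{G·T}) − 1/p` (rpow) is strictly increasing
in `G` on `(0, ∞)`. -/
theorem stmt_6 (p T : ℝ) (hp0 : 0 < p) (hp1 : p < 1) (hT : 0 < T) :
    StrictMonoOn
      (fun G : ℝ => G * T + G * T / (1 - (1 - p) ^ (G * T)) - 1 / p)
      (Set.Ioi 0) := by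
  have hlatency : StrictMonoOn (fun x : ℝ ↦ x + x / (1 - (1 - p) ^ x)) (Ioi 0) :=
    strictMono_id.strictMonoOn _ |>.add
      (strictMonoOn_div_one_sub_rpow (by linarith) (by linarith))
  have hscale : StrictMonoOn (fun G : ℝ ↦ G * T) (Ioi 0) :=
    (strictMono_mul_right_of_pos hT).strictMonoOn _
  have hmaps : MapsTo (fun G : ℝ ↦ G * T) (Ioi 0) (Ioi 0) := fun G hG ↦ mul_pos hG hT
  intro x hx y hy hxy
  simpa using hlatency.comp hscale hmaps hx hy hxy
end

section
/- Let 0 < p < 1, T > 0, α > 2, C > 0, define ξ(G) = C·(1 − (1−p)^{G·T})·G^{−2/α} and T_comm(G) = G·T + G·T/(1 − (1−p)^{G·T}) − 1/p for G > 0, and let F > 0. Suppose the feasible set S = {G ≥ 1 : ξ(G) ≤ F} is nonempty. If ξ(1) ≤ F, then the minimum of T_comm over S equals T_comm(1) = T + T/(1 − (1−p)^{T}) − 1/p. If ξ(1) > F, then F < ξ(g₀) (g₀ the maximizer of ξ), and the minimum of T_comm over S equals T_comm(g_b), where g_b is the unique solution of ξ(g_b) = F in (g₀, ∞). -/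
/-!
`T_comm(G) = G T + h(G T) - 1/p` with `h x = x / (1 - q ^ x)`, `q = 1 - p`, and `1 / h x` is
minus the chord slope of the convex function `q ^ ·` from `0` to `x`; so `h`, and with it `T_comm`,
is increasing, and the minimum over `S` is attained at the least element of `S`.
If `ξ 1 ≤ F` this is `1`. Otherwise unimodality forces every feasible `G` past `g₀` and makes
`S = [g_b, ∞)`, where `g_b` comes from the intermediate value theorem on `[g₀, G]` for any feasible
`G` and is unique because `ξ` is injective on `[g₀, ∞)`.
-/

open Set

lemma div_one_sub_rpow_monotoneOn {q : ℝ} (hq0 : 0 < q) (hq1 : q < 1) :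
    MonotoneOn (fun x : ℝ => x / (1 - q ^ x)) (Ioi 0) := by
  intro x (hx : 0 < x) y (hy : 0 < y) hxy
  have hslope : (q ^ x - 1) / x ≤ (q ^ y - 1) / y := by
    simpa using (convexOn_rpow_left hq0).secant_mono (a := 0) (mem_univ _) (mem_univ _)
      (mem_univ _) hx.ne' hy.ne' hxy
  have hslope' : (1 - q ^ y) / y ≤ (1 - q ^ x) / x := by
    simpa only [← neg_div, neg_sub] using neg_le_neg hslope
  have hpos : 0 < (1 - q ^ y) / y := div_pos (sub_pos.2 (Real.rpow_lt_one hq0.le hq1 hy)) hy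
  calc x / (1 - q ^ x) = ((1 - q ^ x) / x)⁻¹ := (inv_div _ _).symm
    _ ≤ ((1 - q ^ y) / y)⁻¹ := inv_anti₀ hpos hslope'
    _ = y / (1 - q ^ y) := inv_div _ _

lemma monotoneOn_mul_add_mul_div_one_sub_rpow_sub {q T : ℝ} (c : ℝ) (hq0 : 0 < q) (hq1 : q < 1)
    (hT : 0 < T) : MonotoneOn (fun G : ℝ => G * T + G * T / (1 - q ^ (G * T)) - c) (Ioi 0) := by
  intro a (ha : 0 < a) b (hb : 0 < b) hab
  have hab' : a * T ≤ b * T := mul_le_mul_of_nonneg_right hab hT.le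
  have := div_one_sub_rpow_monotoneOn hq0 hq1 (mul_pos ha hT) (mul_pos hb hT) hab'
  dsimp only at this ⊢
  linarith

lemma continuousOn_mul_one_sub_rpow_mul_rpow (C q T r : ℝ) (hq : 0 < q) :
    ContinuousOn (fun G : ℝ => C * (1 - q ^ (G * T)) * G ^ r) (Ioi 0) := by
  fun_prop (disch := grind)

section Unimodal

variable {α β : Type*} [LinearOrder α] [Preorder β] {f : α → β} {a b : α}

lemma isMaxOn_of_monotoneOn_Ioc_of_antitoneOn_Ici (hmono : MonotoneOn f (Ioc a b))
    (hanti : AntitoneOn f (Ici b)) : IsMaxOn f (Ioi a) b := by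
  refine isMaxOn_iff.2 fun x (hx : a < x) => ?_
  rcases le_total x b with h | h
  · exact hmono ⟨hx, h⟩ ⟨hx.trans_le h, le_rfl⟩ h
  · exact hanti le_rfl h h

lemma lt_of_monotoneOn_Ioc_of_apply_lt (hmono : MonotoneOn f (Ioc a b)) {x y : α} (hx : a < x)
    (hxy : x ≤ y) (hfxy : f y < f x) : b < y := by
  by_contra! hy
  exact hfxy.not_ge (hmono ⟨hx, hxy.trans hy⟩ ⟨hx.trans_le hxy, hy⟩ hxy)

end Unimodal

lemma setOf_one_le_and_apply_le_eq_Ici {f : ℝ → ℝ} {g₀ F gb : ℝ}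
    (hmono : MonotoneOn f (Ioc 0 g₀)) (hanti : StrictAntiOn f (Ici g₀)) (hF : F < f 1)
    (hgb : g₀ < gb) (hfgb : f gb = F) : {G | 1 ≤ G ∧ f G ≤ F} = Ici gb := by
  ext G
  constructor
  · rintro ⟨hG1, hGF⟩
    have hG : g₀ < G := lt_of_monotoneOn_Ioc_of_apply_lt hmono one_pos hG1 (hGF.trans_lt hF)
    exact (hanti.le_iff_ge hG.le hgb.le).1 (hGF.trans_eq hfgb.symm)
  · intro (hG : gb ≤ G)
    have hfG : f G ≤ F := hfgb ▸ hanti.antitoneOn hgb.le (hgb.le.trans hG) hG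
    refine ⟨?_, hfG⟩
    by_contra! h1
    exact (hfG.trans_lt hF).not_gt (hanti (hgb.le.trans hG) (hgb.le.trans (hG.trans h1.le)) h1)

theorem stmt_7_general (p T α C F g₀ : ℝ) (hp0 : 0 < p) (hp1 : p < 1) (hT : 0 < T)
    (ξ Tcomm : ℝ → ℝ)
    (hξ : ∀ G : ℝ, 0 < G → ξ G = C * (1 - (1 - p) ^ (G * T)) * G ^ (-2 / α))
    (hTcomm : ∀ G : ℝ,
      Tcomm G = G * T + G * T / (1 - (1 - p) ^ (G * T)) - 1 / p)
    (hg₀ : 0 < g₀) (hmono : StrictMonoOn ξ (Set.Ioc 0 g₀))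
    (hanti : StrictAntiOn ξ (Set.Ici g₀))
    (hS : ∃ G : ℝ, 1 ≤ G ∧ ξ G ≤ F) :
    (ξ 1 ≤ F →
      IsLeast (Tcomm '' {G : ℝ | 1 ≤ G ∧ ξ G ≤ F}) (Tcomm 1) ∧
      Tcomm 1 = T + T / (1 - (1 - p) ^ T) - 1 / p) ∧
    (F < ξ 1 →
      F < ξ g₀ ∧ (∃! gb : ℝ, g₀ < gb ∧ ξ gb = F) ∧
      ∀ gb : ℝ, g₀ < gb → ξ gb = F →
        IsLeast (Tcomm '' {G : ℝ | 1 ≤ G ∧ ξ G ≤ F}) (Tcomm gb)) := by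
  have hTcomm_mono : MonotoneOn Tcomm (Ioi 0) := by
    rw [funext hTcomm]
    exact monotoneOn_mul_add_mul_div_one_sub_rpow_sub _ (by linarith) (by linarith) hT
  refine ⟨fun hF1 => ⟨?_, by rw [hTcomm, one_mul]⟩, fun hF1 => ?_⟩
  · have hS1 : IsLeast {G : ℝ | 1 ≤ G ∧ ξ G ≤ F} 1 := ⟨⟨le_rfl, hF1⟩, fun G hG => hG.1⟩
    exact (hTcomm_mono.mono fun G hG => one_pos.trans_le hG.1).map_isLeast hS1
  have hFg₀ : F < ξ g₀ := hF1.trans_le <| isMaxOn_iff.1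
    (isMaxOn_of_monotoneOn_Ioc_of_antitoneOn_Ici hmono.monotoneOn hanti.antitoneOn) 1 (mem_Ioi.2 one_pos)
  obtain ⟨Gs, hGs1, hGsF⟩ := hS
  have hGs : g₀ < Gs :=
    lt_of_monotoneOn_Ioc_of_apply_lt hmono.monotoneOn one_pos hGs1 (hGsF.trans_lt hF1)
  have hcont : ContinuousOn ξ (Icc g₀ Gs) :=
    ((continuousOn_mul_one_sub_rpow_mul_rpow C (1 - p) T (-2 / α) (by linarith)).congr
      fun G hG => hξ G hG).mono fun G hG => hg₀.trans_le hG.1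
  obtain ⟨gb, ⟨hgb, -⟩, hgbF⟩ := intermediate_value_Ioc' hGs.le hcont ⟨hGsF, hFg₀⟩
  refine ⟨hFg₀, ⟨gb, ⟨hgb, hgbF⟩, fun g hg => hanti.injOn hg.1.le hgb.le (hg.2.trans hgbF.symm)⟩,
    fun g hg hgF => ?_⟩
  rw [setOf_one_le_and_apply_le_eq_Ici hmono.monotoneOn hanti hF1 hg hgF]
  exact (hTcomm_mono.mono fun G hG => (hg₀.trans hg).trans_le hG).map_isLeast isLeast_Ici

/-- minimization of `T_comm` over the feasible set
`S = {G ≥ 1 : ξ(G) ≤ F}` (nonempty). If `ξ(1) ≤ F` the minimum is `T_comm(1)`;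
if `ξ(1) > F` then `F < ξ(g₀)` and the minimum is `T_comm(g_b)` where `g_b` is
the unique solution of `ξ(g_b) = F` in `(g₀, ∞)`. -/
theorem stmt_7 (p T α C F g₀ : ℝ) (hp0 : 0 < p) (hp1 : p < 1) (hT : 0 < T)
    (hα : 2 < α) (hC : 0 < C) (hF : 0 < F) (ξ Tcomm : ℝ → ℝ)
    (hξ : ∀ G : ℝ, 0 < G → ξ G = C * (1 - (1 - p) ^ (G * T)) * G ^ (-2 / α))
    (hTcomm : ∀ G : ℝ,
      Tcomm G = G * T + G * T / (1 - (1 - p) ^ (G * T)) - 1 / p)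
    (hg₀ : 0 < g₀) (hmono : StrictMonoOn ξ (Set.Ioc 0 g₀))
    (hanti : StrictAntiOn ξ (Set.Ici g₀)) (hmax : ∀ G, 0 < G → ξ G ≤ ξ g₀)
    (hS : ∃ G : ℝ, 1 ≤ G ∧ ξ G ≤ F) :
    (ξ 1 ≤ F →
      IsLeast (Tcomm '' {G : ℝ | 1 ≤ G ∧ ξ G ≤ F}) (Tcomm 1) ∧
      Tcomm 1 = T + T / (1 - (1 - p) ^ T) - 1 / p) ∧
    (F < ξ 1 →
      F < ξ g₀ ∧ (∃! gb : ℝ, g₀ < gb ∧ ξ gb = F) ∧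
      ∀ gb : ℝ, g₀ < gb → ξ gb = F →
        IsLeast (Tcomm '' {G : ℝ | 1 ≤ G ∧ ξ G ≤ F}) (Tcomm gb)) :=
  stmt_7_general p T α C F g₀ hp0 hp1 hT ξ Tcomm hξ hTcomm hg₀ hmono hanti hS
end

section
/- Let N be a Poisson random variable with mean λ > 0, let K be a nonnegative integer, and let β > 0 and μ > 0 satisfy μ > β·K. Then (∑_{n=0}^{K} P(N = n)/(μ − β·n)) / P(N ≤ K) ≥ 1/(μ − β·λ·(1 − P(N = K)/P(N ≤ K))). -/
/-!
Since `n P(N = n) = λ P(N = n - 1)`, the truncated mean is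
`E[N | N ≤ K] = λ (1 - P(N = K) / P(N ≤ K))`, so the right-hand side is
`1 / E[μ - βN | N ≤ K]`. The inequality is then Jensen's inequality for
the convex function `x ↦ 1 / x` at the points `μ - βn > 0`, `n ≤ K`.
-/

open Finset

noncomputable def poissonWeight (lam : ℝ) (n : ℕ) : ℝ :=
  lam ^ n * Real.exp (-lam) / n.factorial

lemma poissonWeight_pos {lam : ℝ} (hlam : 0 < lam) (n : ℕ) : 0 < poissonWeight lam n := by
  unfold poissonWeight
  have := Real.exp_pos (-lam)
  positivity

lemma succ_mul_poissonWeight_succ (lam : ℝ) (n : ℕ) :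
    (n + 1 : ℝ) * poissonWeight lam (n + 1) = lam * poissonWeight lam n := by
  unfold poissonWeight
  rw [Nat.factorial_succ]
  push_cast
  field_simp
  ring

lemma sum_range_mul_poissonWeight (lam : ℝ) (K : ℕ) :
    ∑ n ∈ range (K + 1), (n : ℝ) * poissonWeight lam n
      = lam * (∑ n ∈ range (K + 1), poissonWeight lam n - poissonWeight lam K) := by
  rw [sum_range_succ' _ K, sum_range_succ _ K, add_sub_cancel_right, mul_sum]
  simp only [Nat.cast_zero, zero_mul, add_zero, Nat.cast_succ, succ_mul_poissonWeight_succ]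

/-- Sedrakyan's form of Cauchy–Schwarz with numerators `w i` and denominators `w i * y i`. -/
lemma inv_weightedMean_le_weightedMean_inv {ι : Type*} (s : Finset ι) {w y : ι → ℝ}
    (hw : ∀ i ∈ s, 0 < w i) (hy : ∀ i ∈ s, 0 < y i) :
    ((∑ i ∈ s, w i * y i) / ∑ i ∈ s, w i)⁻¹ ≤ (∑ i ∈ s, w i / y i) / ∑ i ∈ s, w i := by
  rcases s.eq_empty_or_nonempty with rfl | hs
  · simp
  have hW : 0 < ∑ i ∈ s, w i := sum_pos hw hs
  have hwy : ∀ i ∈ s, 0 < w i * y i := fun i hi ↦ mul_pos (hw i hi) (hy i hi)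
  rw [inv_div, le_div_iff₀ hW, div_mul_eq_mul_div, ← sq]
  calc (∑ i ∈ s, w i) ^ 2 / ∑ i ∈ s, w i * y i
      ≤ ∑ i ∈ s, w i ^ 2 / (w i * y i) := sq_sum_div_le_sum_sq_div s w hwy
    _ = ∑ i ∈ s, w i / y i :=
      sum_congr rfl fun i hi ↦ by rw [sq, mul_div_mul_left _ _ (hw i hi).ne']

theorem stmt_12_general (lam β μ : ℝ) (K : ℕ) (hlam : 0 < lam) (hβ : 0 < β)
    (hμK : β * K < μ) :
    (∑ n ∈ Finset.range (K + 1),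
        (lam ^ n * Real.exp (-lam) / n.factorial) / (μ - β * n))
        / (∑ n ∈ Finset.range (K + 1), lam ^ n * Real.exp (-lam) / n.factorial)
      ≥ 1 / (μ - β * lam * (1 - (lam ^ K * Real.exp (-lam) / K.factorial)
          / (∑ n ∈ Finset.range (K + 1),
              lam ^ n * Real.exp (-lam) / n.factorial))) := by
  change _ ≥ 1 / (μ - β * lam *
    (1 - poissonWeight lam K / ∑ n ∈ range (K + 1), poissonWeight lam n))
  set S := ∑ n ∈ range (K + 1), poissonWeight lam n with hS_def
  have hS : 0 < S := sum_pos (fun n _ ↦ poissonWeight_pos hlam n) nonempty_range_add_one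
  have hstable : ∀ n ∈ range (K + 1), 0 < μ - β * n := fun n hn ↦ by
    have : (n : ℝ) ≤ K := by exact_mod_cast Nat.lt_succ_iff.mp (mem_range.mp hn)
    nlinarith
  have hmean : (∑ n ∈ range (K + 1), poissonWeight lam n * (μ - β * n)) / S
      = μ - β * lam * (1 - poissonWeight lam K / S) := by
    have hsplit : ∑ n ∈ range (K + 1), poissonWeight lam n * (μ - β * n)
        = μ * S - β * ∑ n ∈ range (K + 1), (n : ℝ) * poissonWeight lam n := by
      rw [mul_sum, mul_sum, ← sum_sub_distrib]
      exact sum_congr rfl fun n _ ↦ by ring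
    rw [hsplit, sum_range_mul_poissonWeight, ← hS_def]
    field_simp
  rw [ge_iff_le, one_div, ← hmean]
  exact inv_weightedMean_le_weightedMean_inv _ (fun n _ ↦ poissonWeight_pos hlam n) hstable

/-- Jensen-type lower bound. For a Poisson random variable `N`
with mean `lam > 0` (`P(N = n) = lamⁿ e^{−lam}/n!`), `K : ℕ`, `β > 0`, `μ > 0`
with `μ > β·K`:
`E[1/(μ − βN) | N ≤ K] ≥ 1/(μ − β·lam·(1 − P(N = K)/P(N ≤ K)))`. -/
theorem stmt_12 (lam β μ : ℝ) (K : ℕ) (hlam : 0 < lam) (hβ : 0 < β)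
    (hμ : 0 < μ) (hμK : β * K < μ) :
    (∑ n ∈ Finset.range (K + 1),
        (lam ^ n * Real.exp (-lam) / n.factorial) / (μ - β * n))
        / (∑ n ∈ Finset.range (K + 1), lam ^ n * Real.exp (-lam) / n.factorial)
      ≥ 1 / (μ - β * lam * (1 - (lam ^ K * Real.exp (-lam) / K.factorial)
          / (∑ n ∈ Finset.range (K + 1),
              lam ^ n * Real.exp (-lam) / n.factorial))) :=
  stmt_12_general lam β μ K hlam hβ hμK
end

section
/- Let Q, A, C be real-valued random variables on a probability space with finite second moments, where A is Poisson distributed with mean a > 0 and C is Poisson distributed with mean c satisfying c > a, A and C are independent, Q is independent of A − C, and E[(Q + A − C)²] = E[Q²]. Then E[Q] = a/(c − a) + (c − a)/2 + 1/2. -/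
/-!
The factorial moments of a Poisson variable of rate `r` are `E[X (X - 1) ⋯ (X - k + 1)] = r ^ k`,
so `A` and `C` have means and variances `a` and `c`. With `D = A - C`, independence of `Q` and `D`
turns stationarity `E[(Q + D)²] = E[Q²]` into `2 E[Q] E[D] + E[D²] = 0`, where `E[D] = a - c` and
`E[D²] = Var D + (E D)² = a + c + (a - c)²`; solving for `E[Q]` gives the formula.
-/

open MeasureTheory ProbabilityTheory
open scoped NNReal Nat

theorem Nat.cast_sq_eq_descFactorial_add {R : Type*} [Semiring R] (n : ℕ) :
    (n : R) ^ 2 = n.descFactorial 2 + n.descFactorial 1 := by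
  rw [← Nat.cast_pow, ← Nat.cast_add]
  congr 1
  cases n <;> simp [Nat.descFactorial_succ]; ring

theorem Real.hasSum_descFactorial_mul_pow_div_factorial (k : ℕ) (r : ℝ) :
    HasSum (fun n : ℕ => (n.descFactorial k : ℝ) * (r ^ n / n !)) (r ^ k * Real.exp r) := by
  rw [← hasSum_nat_add_iff' k, Finset.sum_eq_zero fun i hi => by
    rw [Nat.descFactorial_eq_zero_iff_lt.2 (Finset.mem_range.1 hi)]; simp, sub_zero]
  have h_shift (n : ℕ) : ((n + k).descFactorial k : ℝ) * (r ^ (n + k) / (n + k) !)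
      = r ^ k * (r ^ n / n !) := by
    rw [← Nat.factorial_mul_descFactorial (Nat.le_add_left k n), Nat.add_sub_cancel]
    push_cast
    field_simp
    ring
  simpa only [h_shift, Real.exp_eq_exp_ℝ] using
    (NormedSpace.expSeries_div_hasSum_exp r).mul_left (r ^ k)

namespace ProbabilityTheory

section PoissonMoments

variable (r : ℝ≥0)

lemma hasSum_poissonPMFReal_mul_descFactorial (k : ℕ) :
    HasSum (fun n : ℕ => Real.exp (-r) * r ^ n / n ! * (n.descFactorial k : ℝ)) (r ^ k) := by
  have h := (Real.hasSum_descFactorial_mul_pow_div_factorial k r).mul_left (Real.exp (-r))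
  rw [mul_left_comm, ← Real.exp_add, neg_add_cancel, Real.exp_zero, mul_one] at h
  exact h.congr_fun fun n => by ring

lemma integrable_descFactorial_poissonMeasure (k : ℕ) :
    Integrable (fun n : ℕ => (n.descFactorial k : ℝ)) Po(r) := by
  simpa [integrable_poissonMeasure_iff] using
    (hasSum_poissonPMFReal_mul_descFactorial r k).summable

lemma integral_descFactorial_poissonMeasure (k : ℕ) :
    ∫ n, (n.descFactorial k : ℝ) ∂Po(r) = r ^ k := by
  simpa only [integral_poissonMeasure, smul_eq_mul] using
    (hasSum_poissonPMFReal_mul_descFactorial r k).tsum_eq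

lemma memLp_natCast_poissonMeasure : MemLp (Nat.cast : ℕ → ℝ) 2 Po(r) := by
  rw [memLp_two_iff_integrable_sq measurable_from_nat.aestronglyMeasurable]
  simpa only [Nat.cast_sq_eq_descFactorial_add] using
    (integrable_descFactorial_poissonMeasure r 2).fun_add
      (integrable_descFactorial_poissonMeasure r 1)

lemma integral_natCast_poissonMeasure : ∫ n, (n : ℝ) ∂Po(r) = r := by
  simpa using integral_descFactorial_poissonMeasure r 1

lemma variance_natCast_poissonMeasure : Var[Nat.cast; Po(r)] = r := by
  rw [variance_eq_sub (memLp_natCast_poissonMeasure r)]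
  simp only [Pi.pow_apply, Nat.cast_sq_eq_descFactorial_add]
  rw [integral_add (integrable_descFactorial_poissonMeasure r 2)
    (integrable_descFactorial_poissonMeasure r 1), integral_descFactorial_poissonMeasure,
    integral_descFactorial_poissonMeasure, integral_natCast_poissonMeasure]
  ring

end PoissonMoments

section PoissonRandomVariable

variable {Ω : Type*} [MeasurableSpace Ω] {P : Measure Ω} {X Y : Ω → ℕ} {r s : ℝ≥0}

lemma hasLaw_poissonMeasure_of_measure_eq (hX : Measurable X)
    (h : ∀ n : ℕ, P {ω | X ω = n} = ENNReal.ofReal (r ^ n * Real.exp (-r) / n !)) :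
    HasLaw X Po(r) P where
  aemeasurable := hX.aemeasurable
  map_eq := Measure.ext_of_singleton fun n => by
    rw [Measure.map_apply hX (measurableSet_singleton n), poissonMeasure_singleton, mul_comm]
    exact h n

lemma HasLaw.memLp_natCast_of_poisson (hX : HasLaw X Po(r) P) :
    MemLp (fun ω => (X ω : ℝ)) 2 P := by
  refine (memLp_map_measure_iff measurable_from_nat.aestronglyMeasurable hX.aemeasurable).1 ?_
  rw [hX.map_eq]
  exact memLp_natCast_poissonMeasure r

lemma HasLaw.integral_natCast_of_poisson (hX : HasLaw X Po(r) P) :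
    ∫ ω, (X ω : ℝ) ∂P = r :=
  (hX.integral_comp measurable_from_nat.aestronglyMeasurable).trans
    (integral_natCast_poissonMeasure r)

lemma HasLaw.variance_natCast_of_poisson (hX : HasLaw X Po(r) P) :
    Var[fun ω => (X ω : ℝ); P] = r := by
  rw [← variance_natCast_poissonMeasure r, ← hX.map_eq,
    variance_map measurable_from_nat.aemeasurable hX.aemeasurable]
  rfl

lemma HasLaw.integral_natCast_sub_of_poisson (hX : HasLaw X Po(r) P) (hY : HasLaw Y Po(s) P) :
    ∫ ω, ((X ω : ℝ) - Y ω) ∂P = r - s := by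
  have := hX.isProbabilityMeasure
  rw [integral_sub (hX.memLp_natCast_of_poisson.integrable one_le_two)
    (hY.memLp_natCast_of_poisson.integrable one_le_two),
    hX.integral_natCast_of_poisson, hY.integral_natCast_of_poisson]

lemma IndepFun.integral_natCast_sub_sq_of_poisson (hXY : X ⟂ᵢ[P] Y) (hX : HasLaw X Po(r) P)
    (hY : HasLaw Y Po(s) P) :
    ∫ ω, ((X ω : ℝ) - Y ω) ^ 2 ∂P = r + s + (r - s) ^ 2 := by
  have := hX.isProbabilityMeasure
  have hXY_memLp : MemLp (fun ω => (X ω : ℝ) - Y ω) 2 P :=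
    hX.memLp_natCast_of_poisson.sub hY.memLp_natCast_of_poisson
  have hXY_real : (fun ω => (X ω : ℝ)) ⟂ᵢ[P] fun ω => (Y ω : ℝ) :=
    hXY.comp measurable_from_nat measurable_from_nat
  have h_var := variance_fun_sub hX.memLp_natCast_of_poisson hY.memLp_natCast_of_poisson
  rw [variance_eq_sub hXY_memLp,
    hXY_real.covariance_eq_zero hX.memLp_natCast_of_poisson hY.memLp_natCast_of_poisson,
    hX.variance_natCast_of_poisson, hY.variance_natCast_of_poisson] at h_var
  simp only [Pi.pow_apply, hX.integral_natCast_sub_of_poisson hY] at h_var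
  linarith

end PoissonRandomVariable

lemma IndepFun.integral_add_sq {Ω : Type*} [MeasurableSpace Ω] {P : Measure Ω}
    [IsProbabilityMeasure P] {X Y : Ω → ℝ} (h : X ⟂ᵢ[P] Y) (hX : MemLp X 2 P) (hY : MemLp Y 2 P) :
    ∫ ω, (X ω + Y ω) ^ 2 ∂P
      = ∫ ω, X ω ^ 2 ∂P + 2 * ((∫ ω, X ω ∂P) * ∫ ω, Y ω ∂P) + ∫ ω, Y ω ^ 2 ∂P := by
  have h_var := h.variance_add hX hY
  rw [variance_eq_sub (hX.add hY), variance_eq_sub hX, variance_eq_sub hY] at h_var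
  simp only [Pi.pow_apply, Pi.add_apply,
    integral_add (hX.integrable one_le_two) (hY.integrable one_le_two)] at h_var
  linarith

end ProbabilityTheory

/-- heavy-traffic stationary mean queue length with Poisson
arrivals `A` (mean `a`) and departures `C` (mean `c > a`), `A ⟂ C`, `Q`
independent of `A − C`, and stationarity `E[(Q + A − C)²] = E[Q²]`:
`E[Q] = a/(c − a) + (c − a)/2 + 1/2`. -/
theorem stmt_15 {Ω : Type*} [MeasurableSpace Ω] (P : Measure Ω)
    [IsProbabilityMeasure P] (Q : Ω → ℝ) (A C : Ω → ℕ) (a c : ℝ)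
    (ha : 0 < a) (hac : a < c)
    (hQ : MemLp Q 2 P) (hAmeas : Measurable A) (hCmeas : Measurable C)
    (hA : ∀ n : ℕ, P {ω | A ω = n}
      = ENNReal.ofReal (a ^ n * Real.exp (-a) / n.factorial))
    (hC : ∀ n : ℕ, P {ω | C ω = n}
      = ENNReal.ofReal (c ^ n * Real.exp (-c) / n.factorial))
    (hAC : IndepFun A C P)
    (hind : IndepFun Q (fun ω => (A ω : ℝ) - (C ω : ℝ)) P)
    (hstat : ∫ ω, (Q ω + (A ω : ℝ) - (C ω : ℝ)) ^ 2 ∂P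
      = ∫ ω, (Q ω) ^ 2 ∂P) :
    ∫ ω, Q ω ∂P = a / (c - a) + (c - a) / 2 + 1 / 2 := by
  lift a to ℝ≥0 using ha.le
  lift c to ℝ≥0 using (ha.trans hac).le
  have hA' := hasLaw_poissonMeasure_of_measure_eq hAmeas hA
  have hC' := hasLaw_poissonMeasure_of_measure_eq hCmeas hC
  simp only [add_sub_assoc] at hstat
  rw [hind.integral_add_sq hQ (hA'.memLp_natCast_of_poisson.sub hC'.memLp_natCast_of_poisson),
    hA'.integral_natCast_sub_of_poisson hC', hAC.integral_natCast_sub_sq_of_poisson hA' hC']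
    at hstat
  have hca : (c : ℝ) - a ≠ 0 := (sub_pos.2 hac).ne'
  field_simp
  linarith
end
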